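/- Let m and n be integers with n ≥ 2 and m − n ≥ 3 such that exactly one of m and n is even. Then for every i with 1 ≤ i ≤ n−1, the vertices v_{i,i} and v_{i+1,i+1} of M_{m,n} satisfy d(v_{i,i}, v_{1,n}) = d(v_{i+1,i+1}, v_{1,n}) and d(v_{i,i}, v_{m−1,1}) = d(v_{i+1,i+1}, v_{m−1,1}); consequently the set {v_{1,n}, v_{m−1,1}} is not a resolving set of M_{m,n}. -/
import Mathlib


/-- The relation generating the edges of the generalized Möbius ladder `M_{m,n}`:
horizontal edges `{(i,j),(i+1,j)}`, vertical edges `{(i,j),(i,j+1)}`, and the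
twisted edges `{(m-1,j),(1,n+1-j)}`. -/
def gmlRel (m n : ℕ) (u v : ℕ × ℕ) : Prop :=
  (u.2 = v.2 ∧ v.1 = u.1 + 1) ∨
  (u.1 = v.1 ∧ v.2 = u.2 + 1) ∨
  (u.1 = m - 1 ∧ v.1 = 1 ∧ u.2 + v.2 = n + 1)

/-- The vertex set `{(i,j) : 1 ≤ i ≤ m-1, 1 ≤ j ≤ n}` of `M_{m,n}`. -/
abbrev GMLVert (m n : ℕ) : Type :=
  {p : ℕ × ℕ // 1 ≤ p.1 ∧ p.1 ≤ m - 1 ∧ 1 ≤ p.2 ∧ p.2 ≤ n}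

/-- The generalized Möbius ladder `M_{m,n}` as a simple graph. -/
def GML (m n : ℕ) : SimpleGraph (GMLVert m n) :=
  SimpleGraph.fromRel (fun u v => gmlRel m n u.val v.val)

/-- `W` is a resolving set of `M_{m,n}`: distinct vertices have distinct
tuples of distances to the elements of `W`. -/
def IsResolving (m n : ℕ) (W : Set (GMLVert m n)) : Prop :=
  ∀ u v : GMLVert m n,
    (∀ w ∈ W, (GML m n).dist u w = (GML m n).dist v w) → u = v

/-- The metric dimension of `M_{m,n}`: the minimum cardinality of a resolving set. -/
noncomputable def metricDim (m n : ℕ) : ℕ :=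
  sInf {k : ℕ | ∃ W : Finset (GMLVert m n), W.card = k ∧ IsResolving m n ↑W}

/-! ### Auxiliary machinery -/

/-- `GDist m n u v k`: `u` and `v` are reachable and at distance at most `k`. -/
def GDist (m n : ℕ) (u v : GMLVert m n) (k : ℕ) : Prop :=
  (GML m n).Reachable u v ∧ (GML m n).dist u v ≤ k

namespace GDist

variable {m n : ℕ} {u v w : GMLVert m n} {j k : ℕ}

lemma refl (u : GMLVert m n) : GDist m n u u 0 :=
  ⟨SimpleGraph.Reachable.refl u, by simp [SimpleGraph.dist_self]⟩

lemma of_adj (h : (GML m n).Adj u v) : GDist m n u v 1 :=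
  ⟨h.reachable, by simpa using SimpleGraph.dist_le h.toWalk⟩

lemma trans (h1 : GDist m n u v j) (h2 : GDist m n v w k) : GDist m n u w (j + k) := by
  obtain ⟨hr1, hd1⟩ := h1
  obtain ⟨hr2, hd2⟩ := h2
  obtain ⟨p, hp⟩ := hr1.exists_walk_length_eq_dist
  obtain ⟨q, hq⟩ := hr2.exists_walk_length_eq_dist
  refine ⟨hr1.trans hr2, ?_⟩
  have := SimpleGraph.dist_le (p.append q)
  rw [SimpleGraph.Walk.length_append, hp, hq] at this
  omega

lemma symm (h : GDist m n u v k) : GDist m n v u k := by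
  obtain ⟨p, hp⟩ := h.1.exists_walk_length_eq_dist
  refine ⟨h.1.symm, ?_⟩
  have := SimpleGraph.dist_le p.reverse
  rw [SimpleGraph.Walk.length_reverse, hp] at this
  exact this.trans h.2

lemma mono (h : GDist m n u v j) (hjk : j ≤ k) : GDist m n u v k :=
  ⟨h.1, h.2.trans hjk⟩

end GDist

lemma gml_adj {m n : ℕ} {u v : GMLVert m n} (hne : u.val ≠ v.val)
    (h : gmlRel m n u.val v.val ∨ gmlRel m n v.val u.val) : (GML m n).Adj u v := by
  rw [GML, SimpleGraph.fromRel_adj]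
  exact ⟨fun e => hne (congrArg Subtype.val e), h⟩

/-- Lower bound for graph distance via a 1-Lipschitz potential. -/
lemma walk_lb {V : Type*} {G : SimpleGraph V} (f : V → ℕ)
    (hf : ∀ a b : V, G.Adj a b → f a ≤ f b + 1) :
    ∀ {u w : V} (p : G.Walk u w), f u ≤ p.length + f w := by
  intro u w p
  induction p with
  | nil => simp
  | @cons a b c h p ih =>
      have := hf a b h
      simp only [SimpleGraph.Walk.length_cons]
      omega

lemma le_dist_of_lipschitz {V : Type*} {G : SimpleGraph V} (f : V → ℕ)
    (hf : ∀ a b : V, G.Adj a b → f a ≤ f b + 1) {u w : V} (hw : f w = 0)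
    (hr : G.Reachable u w) : f u ≤ G.dist u w := by
  obtain ⟨p, hp⟩ := hr.exists_walk_length_eq_dist
  have := walk_lb f hf p
  omega

section Walks

variable {m n : ℕ}

/-- vertical (second-coordinate) path -/
lemma gdist_col (a : ℕ) (h1 : 1 ≤ a) (h2 : a ≤ m - 1) :
    ∀ k b (h3 : 1 ≤ b) (h4 : b + k ≤ n),
      GDist m n ⟨(a, b), ⟨h1, h2, h3, by omega⟩⟩ ⟨(a, b + k), ⟨h1, h2, by omega, h4⟩⟩ k := by
  intro k
  induction k with
  | zero => intro b h3 h4; exact GDist.refl _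
  | succ k ih =>
      intro b h3 h4
      have step : GDist m n ⟨(a, b), ⟨h1, h2, h3, by omega⟩⟩
          ⟨(a, b + 1), ⟨h1, h2, by omega, by omega⟩⟩ 1 := by
        refine GDist.of_adj (gml_adj ?_ (Or.inl ?_))
        · intro e; simp only [Prod.mk.injEq] at e; omega
        · exact Or.inr (Or.inl ⟨rfl, rfl⟩)
      have tail := ih (b + 1) (by omega) (by omega)
      have e : (⟨(a, b + 1 + k), ⟨h1, h2, by omega, by omega⟩⟩ : GMLVert m n)
          = ⟨(a, b + (k + 1)), ⟨h1, h2, by omega, h4⟩⟩ := by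
        apply Subtype.ext; simp only [Prod.mk.injEq, true_and, and_true]; omega
      have h5 := step.trans tail
      rw [e] at h5
      exact h5.mono (by omega)

/-- horizontal (first-coordinate) path -/
lemma gdist_row (b : ℕ) (h3 : 1 ≤ b) (h4 : b ≤ n) :
    ∀ k a (h1 : 1 ≤ a) (h2 : a + k ≤ m - 1),
      GDist m n ⟨(a, b), ⟨h1, by omega, h3, h4⟩⟩ ⟨(a + k, b), ⟨by omega, h2, h3, h4⟩⟩ k := by
  intro k
  induction k with
  | zero => intro a h1 h2; exact GDist.refl _
  | succ k ih =>
      intro a h1 h2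
      have step : GDist m n ⟨(a, b), ⟨h1, by omega, h3, h4⟩⟩
          ⟨(a + 1, b), ⟨by omega, by omega, h3, h4⟩⟩ 1 := by
        refine GDist.of_adj (gml_adj ?_ (Or.inl ?_))
        · intro e; simp only [Prod.mk.injEq] at e; omega
        · exact Or.inl ⟨rfl, rfl⟩
      have tail := ih (a + 1) (by omega) (by omega)
      have e : (⟨(a + 1 + k, b), ⟨by omega, by omega, h3, h4⟩⟩ : GMLVert m n)
          = ⟨(a + (k + 1), b), ⟨by omega, h2, h3, h4⟩⟩ := by
        apply Subtype.ext; simp only [Prod.mk.injEq, true_and, and_true]; omega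
      have h5 := step.trans tail
      rw [e] at h5
      exact h5.mono (by omega)

end Walks

section Distances

variable {m n : ℕ} (hn : 2 ≤ n) (hm : n + 3 ≤ m)
include hn hm

/-- Upper bound: `d(v_{i,i}, v_{1,n}) ≤ n - 1`. -/
lemma gdist_diag_corner1 (i : ℕ) (hi1 : 1 ≤ i) (hi2 : i ≤ n) :
    GDist m n ⟨(i, i), by omega⟩ ⟨(1, n), by omega⟩ (n - 1) := by
  have hrow := gdist_row (m := m) (n := n) i hi1 hi2 (i - 1) 1 le_rfl (by omega)
  have e1 : (⟨(1 + (i - 1), i), by omega⟩ : GMLVert m n) = ⟨(i, i), by omega⟩ := by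
    apply Subtype.ext; simp only [Prod.mk.injEq, true_and, and_true]; omega
  rw [e1] at hrow
  have hcol := gdist_col (m := m) (n := n) 1 le_rfl (by omega) (n - i) i hi1 (by omega)
  have e2 : (⟨(1, i + (n - i)), by omega⟩ : GMLVert m n) = ⟨(1, n), by omega⟩ := by
    apply Subtype.ext; simp only [Prod.mk.injEq, true_and, and_true]; omega
  rw [e2] at hcol
  have := (hrow.symm.trans hcol)
  exact this.mono (by omega)

/-- Upper bound: `d(v_{i,i}, v_{m-1,1}) ≤ n`. -/
lemma gdist_diag_corner2 (i : ℕ) (hi1 : 1 ≤ i) (hi2 : i ≤ n) :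
    GDist m n ⟨(i, i), by omega⟩ ⟨(m - 1, 1), by omega⟩ n := by
  -- (i,i) to (1,i): i-1 steps
  have hrow := gdist_row (m := m) (n := n) i hi1 hi2 (i - 1) 1 le_rfl (by omega)
  have e1 : (⟨(1 + (i - 1), i), by omega⟩ : GMLVert m n) = ⟨(i, i), by omega⟩ := by
    apply Subtype.ext; simp only [Prod.mk.injEq, true_and, and_true]; omega
  rw [e1] at hrow
  -- twist edge (1,i) -- (m-1, n+1-i)
  have htw : GDist m n (⟨(1, i), by omega⟩ : GMLVert m n) ⟨(m - 1, n + 1 - i), by omega⟩ 1 := by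
    refine GDist.of_adj (gml_adj ?_ (Or.inr ?_))
    · intro e; simp only [Prod.mk.injEq] at e; omega
    · exact Or.inr (Or.inr ⟨rfl, rfl, show n + 1 - i + i = n + 1 by omega⟩)
  -- (m-1,1) to (m-1, n+1-i): n-i steps
  have hcol := gdist_col (m := m) (n := n) (m - 1) (by omega) le_rfl (n - i) 1 le_rfl (by omega)
  have e2 : (⟨(m - 1, 1 + (n - i)), by omega⟩ : GMLVert m n)
      = ⟨(m - 1, n + 1 - i), by omega⟩ := by
    apply Subtype.ext; simp only [Prod.mk.injEq, true_and, and_true]; omega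
  rw [e2] at hcol
  have := (hrow.symm.trans htw).trans hcol.symm
  exact this.mono (by omega)

/-- Exact distance to `v_{1,n}` on the diagonal. -/
lemma dist_diag1 (i : ℕ) (hi1 : 1 ≤ i) (hi2 : i ≤ n) :
    (GML m n).dist (⟨(i, i), by omega⟩ : GMLVert m n) ⟨(1, n), by omega⟩ = n - 1 := by
  have hub := gdist_diag_corner1 hn hm i hi1 hi2
  refine le_antisymm hub.2 ?_
  have hlip : ∀ a b : GMLVert m n, (GML m n).Adj a b →
      (fun p : GMLVert m n => min (p.val.1 - 1 + (n - p.val.2)) (m - p.val.1 + (p.val.2 - 1))) a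
      ≤ (fun p : GMLVert m n => min (p.val.1 - 1 + (n - p.val.2)) (m - p.val.1 + (p.val.2 - 1))) b
        + 1 := by
    rintro ⟨⟨a1, a2⟩, ha⟩ ⟨⟨b1, b2⟩, hb⟩ hadj
    rw [GML, SimpleGraph.fromRel_adj] at hadj
    obtain ⟨-, h | h⟩ := hadj <;>
      · simp only [gmlRel] at h
        simp only at *
        omega
  have hlow := le_dist_of_lipschitz _ hlip (w := (⟨(1, n), by omega⟩ : GMLVert m n))
    (by simp only; omega) hub.1
  simp only at hlow
  omega

/-- Exact distance to `v_{m-1,1}` on the diagonal. -/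
lemma dist_diag2 (i : ℕ) (hi1 : 1 ≤ i) (hi2 : i ≤ n) :
    (GML m n).dist (⟨(i, i), by omega⟩ : GMLVert m n) ⟨(m - 1, 1), by omega⟩ = n := by
  have hub := gdist_diag_corner2 hn hm i hi1 hi2
  refine le_antisymm hub.2 ?_
  have hlip : ∀ a b : GMLVert m n, (GML m n).Adj a b →
      (fun p : GMLVert m n => min (m - 1 - p.val.1 + (p.val.2 - 1)) (p.val.1 + (n - p.val.2))) a
      ≤ (fun p : GMLVert m n => min (m - 1 - p.val.1 + (p.val.2 - 1)) (p.val.1 + (n - p.val.2))) b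
        + 1 := by
    rintro ⟨⟨a1, a2⟩, ha⟩ ⟨⟨b1, b2⟩, hb⟩ hadj
    rw [GML, SimpleGraph.fromRel_adj] at hadj
    obtain ⟨-, h | h⟩ := hadj <;>
      · simp only [gmlRel] at h
        simp only at *
        omega
  have hlow := le_dist_of_lipschitz _ hlip (w := (⟨(m - 1, 1), by omega⟩ : GMLVert m n))
    (by simp only; omega) hub.1
  simp only at hlow
  omega

end Distances

theorem stmt10 (m n : ℕ) (hn : 2 ≤ n) (hm : n + 3 ≤ m) (hpar : Odd (m + n)) :
    (∀ i : ℕ, ∀ _hi1 : 1 ≤ i, ∀ _hi2 : i ≤ n - 1,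
      (GML m n).dist ⟨(i, i), by omega⟩ ⟨(1, n), by omega⟩ =
        (GML m n).dist ⟨(i + 1, i + 1), by omega⟩ ⟨(1, n), by omega⟩ ∧
      (GML m n).dist ⟨(i, i), by omega⟩ ⟨(m - 1, 1), by omega⟩ =
        (GML m n).dist ⟨(i + 1, i + 1), by omega⟩ ⟨(m - 1, 1), by omega⟩) ∧
    ¬ IsResolving m n {⟨(1, n), by omega⟩, ⟨(m - 1, 1), by omega⟩} := by
  have key : ∀ i : ℕ, ∀ _h1 : 1 ≤ i, ∀ _h2 : i ≤ n,
      (GML m n).dist (⟨(i, i), by omega⟩ : GMLVert m n) ⟨(1, n), by omega⟩ = n - 1 ∧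
      (GML m n).dist (⟨(i, i), by omega⟩ : GMLVert m n) ⟨(m - 1, 1), by omega⟩ = n :=
    fun i h1 h2 => ⟨dist_diag1 hn hm i h1 h2, dist_diag2 hn hm i h1 h2⟩
  constructor
  · intro i hi1 hi2
    obtain ⟨a1, a2⟩ := key i hi1 (by omega)
    obtain ⟨b1, b2⟩ := key (i + 1) (by omega) (by omega)
    exact ⟨a1.trans b1.symm, a2.trans b2.symm⟩
  · intro hres
    have h1 := key 1 le_rfl (by omega)
    have h2 := key 2 (by omega) hn
    have := hres ⟨(1, 1), by omega⟩ ⟨(2, 2), by omega⟩ ?_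
    · have e := congrArg (fun v : GMLVert m n => v.val.1) this
      simp at e
    · intro w hw
      rcases hw with hw | hw <;> subst hw
      · exact h1.1.trans h2.1.symm
      · exact h1.2.trans h2.2.symm
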